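/- Let ψ ∈ Hp(n), let φ be a ψ-compatible family of heaps, let X ∈ [H^op, Set], and let k : [ψ⋆φ] → X be any morphism of presheaves. Then there exists a unique family of morphisms h_i : [φ_i] → X (for i ∈ {1,…,n}) such that h_j is the restriction of h_i whenever ψ(i) = j ≥ 1, and ψ⋆h = k. Explicitly, the unique such family is given by h_i(j) = k(v_j), where {v_1 ≺_ψ v_2 ≺_ψ … ≺_ψ v_{dp_ψ(i)} = i} is the ≼_ψ-downset of i listed in increasing order. -/
import Mathlib


/-! ### Min-heaps and inc-lists: basic combinatorics -/

/-- Auxiliary fuelled computation of the depth of a node in a min-heap. -/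
def dpAux (φ : ℕ → ℕ) : ℕ → ℕ → ℕ
  | 0, _ => 0
  | fuel + 1, i => if i = 0 then 0 else dpAux φ fuel (φ i) + 1

/-- The depth `dp φ i` of `i` in the min-heap `φ`: for a min-heap and `i ≥ 1`
this is the least `k ≥ 1` with `φ^[k] i = 0`. -/
def dp (φ : ℕ → ℕ) (i : ℕ) : ℕ := dpAux φ i i

/-- The order relation `i ≼_φ j` associated to a min-heap `φ`:
`i ≼_φ j` iff `i = φ^k(j)` for some `k ≥ 0`. -/
def hle (φ : ℕ → ℕ) (i j : ℕ) : Prop := ∃ k, i = φ^[k] j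

/-- `φ` is a min-heap of size `n`: `φ 0 = 0` and `φ i < i` for `i ∈ {1,…,n}`.
(The behaviour of `φ` outside `{0,…,n}` is irrelevant.) -/
def IsHeap (n : ℕ) (φ : ℕ → ℕ) : Prop :=
  φ 0 = 0 ∧ ∀ i, 1 ≤ i → i ≤ n → φ i < i

/-- A normalised min-heap of size `n`: additionally `φ i = 0` outside `{0,…,n}`,
so that normalised heaps correspond bijectively to functions `{0,…,n} → {0,…,n}`. -/
def IsHeapN (n : ℕ) (φ : ℕ → ℕ) : Prop :=
  IsHeap n φ ∧ ∀ i, n < i → φ i = 0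

/-- `α` is an inc-list of length `n`: `α 0 = 0` and `α` is strictly increasing
on `{0,…,n}`. -/
def IsInc (n : ℕ) (α : ℕ → ℕ) : Prop :=
  α 0 = 0 ∧ ∀ i j, i < j → j ≤ n → α i < α j

/-- A normalised inc-list of length `n`: additionally `α i = 0` outside `{0,…,n}`. -/
def IsIncN (n : ℕ) (α : ℕ → ℕ) : Prop :=
  IsInc n α ∧ ∀ i, n < i → α i = 0

/-- `φ` is a `ψ`-compatible family of heaps for `ψ ∈ Hp(n)`:
`φ i ∈ Hp(dp_ψ(i))` for each `i ∈ {1,…,n}`, and whenever `ψ i = j ≥ 1`,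
`φ j` is the restriction of `φ i` to `{0,…,dp_ψ(i) − 1}`. -/
def CompatFam (n : ℕ) (ψ : ℕ → ℕ) (φ : ℕ → ℕ → ℕ) : Prop :=
  (∀ i, 1 ≤ i → i ≤ n → IsHeap (dp ψ i) (φ i)) ∧
  (∀ i, 1 ≤ i → i ≤ n → 1 ≤ ψ i → ∀ j, j ≤ dp ψ i - 1 → φ (ψ i) j = φ i j)

/-- The heap `ψ⋆φ` obtained from `ψ ∈ Hp(n)` and a `ψ`-compatible family `φ`:
`(ψ⋆φ)(0) = 0` and `(ψ⋆φ)(i) = ψ^[dp_ψ(i) − φ_i(dp_ψ(i))](i)`. -/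
def star (ψ : ℕ → ℕ) (φ : ℕ → ℕ → ℕ) (i : ℕ) : ℕ :=
  if i = 0 then 0 else ψ^[dp ψ i - φ i (dp ψ i)] i

/-- `r` is a partial order on `{1,…,n}`, contained in the natural order,
in which every downset is linearly ordered. -/
def GoodOrder (n : ℕ) (r : ℕ → ℕ → Prop) : Prop :=
  (∀ i j, r i j → 1 ≤ i ∧ j ≤ n) ∧
  (∀ i, 1 ≤ i → i ≤ n → r i i) ∧
  (∀ i j k, r i j → r j k → r i k) ∧
  (∀ i j, r i j → r j i → i = j) ∧
  (∀ i j, r i j → i ≤ j) ∧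
  (∀ i j l, r i l → r j l → r i j ∨ r j i)

/-- The order relation on `{1,…,n}` associated to a min-heap of size `n`. -/
def heapRel (n : ℕ) (φ : ℕ → ℕ) (i j : ℕ) : Prop := 1 ≤ i ∧ j ≤ n ∧ hle φ i j

open Classical in
/-- The min-heap `α*φ` associated to an inc-list `α ∈ Inc(n)` and a heap
`φ ∈ Hp(α(n))`, given by the explicit formula
`(α*φ)(j) = max { i ∈ {0,…,j−1} : i = 0 or α(i) ≼_φ α(j) }`. -/
noncomputable def astar (α φ : ℕ → ℕ) (j : ℕ) : ℕ :=
  if j = 0 then 0 else Nat.findGreatest (fun i => 1 ≤ i ∧ hle φ (α i) (α j)) (j - 1)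

/-- The inc-list `α^φ_p` of Definition "projection-free": with
`{p_1 ≺ … ≺ p_m = p}` the `≼_{α*φ}`-downset of `p` (so `p_i = (α*φ)^[m−i](p)`),
`α^φ_p(i) = dp_φ(α(p_i))`. -/
noncomputable def aphiFam (α φ : ℕ → ℕ) (p i : ℕ) : ℕ :=
  if i = 0 then 0 else dp φ (α ((astar α φ)^[dp (astar α φ) p - i] p))

/-! ### Type-and-term structures: a concrete presentation of `[H^op, Set]`

A presheaf `X` on the free category `H` (objects `n`, `n_t` for `n ≥ 1`,
generating edges `n → n+1`, `n → n_t`) is presented as a graded pair of sets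
`(Ty, Tm)` with degree functions (with all degrees `≥ 1`) and with boundary
maps `bd : Ty → Ty` (lowering degree by one, and by convention fixing the
degree-one elements) and `bdt : Tm → Ty` (preserving degree).  This category
is equivalent to `[H^op, Set]`. -/
structure TT : Type 1 where
  Ty : Type
  Tm : Type
  degTy : Ty → ℕ
  degTm : Tm → ℕ
  bd : Ty → Ty
  bdt : Tm → Ty
  one_le_degTy : ∀ A, 1 ≤ degTy A
  one_le_degTm : ∀ a, 1 ≤ degTm a
  degTy_bd : ∀ A, 2 ≤ degTy A → degTy (bd A) + 1 = degTy A
  bd_fix : ∀ A, degTy A = 1 → bd A = A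
  degTy_bdt : ∀ a, degTy (bdt a) = degTm a

/-- Morphisms of type-and-term structures (presheaf morphisms). -/
structure TTHom (X Y : TT) where
  onTy : X.Ty → Y.Ty
  onTm : X.Tm → Y.Tm
  degTy_onTy : ∀ A, Y.degTy (onTy A) = X.degTy A
  degTm_onTm : ∀ a, Y.degTm (onTm a) = X.degTm a
  bd_onTy : ∀ A, Y.bd (onTy A) = onTy (X.bd A)
  bdt_onTm : ∀ a, Y.bdt (onTm a) = onTy (X.bdt a)

theorem TTHom.ext {X Y : TT} {f g : TTHom X Y}
    (h1 : f.onTy = g.onTy) (h2 : f.onTm = g.onTm) : f = g := by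
  cases f; cases g; cases h1; cases h2; rfl

/-- The identity morphism. -/
def TTHom.id (X : TT) : TTHom X X :=
  ⟨_root_.id, _root_.id, fun _ => rfl, fun _ => rfl, fun _ => rfl, fun _ => rfl⟩

/-- Composition (diagrammatic order). -/
def TTHom.comp {X Y Z : TT} (f : TTHom X Y) (g : TTHom Y Z) : TTHom X Z where
  onTy := fun A => g.onTy (f.onTy A)
  onTm := fun a => g.onTm (f.onTm a)
  degTy_onTy := fun A => (g.degTy_onTy _).trans (f.degTy_onTy A)
  degTm_onTm := fun a => (g.degTm_onTm _).trans (f.degTm_onTm a)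
  bd_onTy := fun A => by rw [g.bd_onTy, f.bd_onTy]
  bdt_onTm := fun a => by rw [g.bdt_onTm, f.bdt_onTm]

/-- `h` encodes a presheaf morphism `[φ] → X` out of the presheaf associated
to a min-heap `φ` of size `n`: `h i` is defined (`some`) exactly for
`i ∈ {1,…,n}`, has degree `dp_φ(i)`, and `∂(h i) = h (φ i)` when `φ i ≥ 1`. -/
def IsHeapLab (X : TT) (n : ℕ) (φ : ℕ → ℕ) (h : ℕ → Option X.Ty) : Prop :=
  (∀ i, 1 ≤ i → i ≤ n → ∃ A, h i = some A ∧ X.degTy A = dp φ i) ∧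
  (∀ i, ¬(1 ≤ i ∧ i ≤ n) → h i = none) ∧
  (∀ i, 1 ≤ i → i ≤ n → 1 ≤ φ i → (h i).map X.bd = h (φ i))

section AuxLemmas

lemma dpAux_zero (f : ℕ → ℕ) (fuel : ℕ) : dpAux f fuel 0 = 0 := by
  cases fuel <;> simp [dpAux]

lemma dpAux_congr (f : ℕ → ℕ) : ∀ i, (∀ j, 1 ≤ j → j ≤ i → f j < j) →
    ∀ fuel₁ fuel₂, i ≤ fuel₁ → i ≤ fuel₂ → dpAux f fuel₁ i = dpAux f fuel₂ i := by
  intro i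
  induction i using Nat.strong_induction_on with
  | _ i ih =>
    intro hf fuel₁ fuel₂ h1 h2
    rcases Nat.eq_zero_or_pos i with rfl | hi
    · rw [dpAux_zero, dpAux_zero]
    obtain ⟨a, rfl⟩ : ∃ a, fuel₁ = a + 1 := ⟨fuel₁ - 1, by omega⟩
    obtain ⟨b, rfl⟩ : ∃ b, fuel₂ = b + 1 := ⟨fuel₂ - 1, by omega⟩
    have hfi : f i < i := hf i hi le_rfl
    have hf' : ∀ j, 1 ≤ j → j ≤ f i → f j < j := fun j hj1 hj2 => hf j hj1 (by omega)
    simp only [dpAux, if_neg (by omega : ¬ i = 0)]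
    rw [ih (f i) hfi hf' a b (by omega) (by omega)]

lemma dp_zero (f : ℕ → ℕ) : dp f 0 = 0 := dpAux_zero f 0

lemma dp_succ (f : ℕ → ℕ) (i : ℕ) (hf : ∀ j, 1 ≤ j → j ≤ i → f j < j) (hi : 1 ≤ i) :
    dp f i = dp f (f i) + 1 := by
  obtain ⟨m, rfl⟩ : ∃ m, i = m + 1 := ⟨i - 1, by omega⟩
  have hfi : f (m + 1) < m + 1 := hf _ hi le_rfl
  have hf' : ∀ j, 1 ≤ j → j ≤ f (m + 1) → f j < j := fun j hj1 hj2 => hf j hj1 (by omega)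
  show dpAux f (m + 1) (m + 1) = _
  simp only [dpAux, if_neg (by omega : ¬ m + 1 = 0)]
  rw [dpAux_congr f (f (m+1)) hf' m (f (m+1)) (by omega) le_rfl]
  rfl

end AuxLemmas
section HeapLemmas

variable {n : ℕ} {ψ : ℕ → ℕ}

lemma heap_dec (hψ : IsHeap n ψ) {i : ℕ} (hin : i ≤ n) :
    ∀ j, 1 ≤ j → j ≤ i → ψ j < j := fun j h1 h2 => hψ.2 j h1 (h2.trans hin)

lemma dp_succ' (hψ : IsHeap n ψ) {i : ℕ} (h1 : 1 ≤ i) (h2 : i ≤ n) :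
    dp ψ i = dp ψ (ψ i) + 1 := dp_succ ψ i (heap_dec hψ h2) h1

lemma dp_pos (hψ : IsHeap n ψ) {i : ℕ} (h1 : 1 ≤ i) (h2 : i ≤ n) : 1 ≤ dp ψ i := by
  rw [dp_succ' hψ h1 h2]; omega

/-- Main iterate lemma. -/
lemma iter_spec (hψ : IsHeap n ψ) : ∀ m i, 1 ≤ i → i ≤ n → m < dp ψ i →
    1 ≤ ψ^[m] i ∧ ψ^[m] i ≤ n ∧ ψ^[m] i ≤ i ∧ dp ψ (ψ^[m] i) = dp ψ i - m := by
  intro m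
  induction m with
  | zero => intro i h1 h2 _; simpa using ⟨h1, h2⟩
  | succ m ih =>
    intro i h1 h2 hm
    have hd := dp_succ' hψ h1 h2
    have hpsi1 : 1 ≤ ψ i := by
      by_contra h
      have : ψ i = 0 := by omega
      rw [this, dp_zero] at hd
      omega
    have hlt : ψ i < i := hψ.2 i h1 h2
    have := ih (ψ i) hpsi1 (by omega) (by omega)
    rw [Function.iterate_succ_apply]
    exact ⟨this.1, this.2.1, by omega, by omega⟩

lemma iter_le (hψ : IsHeap n ψ) : ∀ m i, i ≤ n → ψ^[m] i ≤ i := by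
  intro m
  induction m with
  | zero => simp
  | succ m ih =>
    intro i hin
    rcases Nat.eq_zero_or_pos i with rfl | hi
    · rw [Function.iterate_succ_apply, hψ.1]; exact ih 0 (by omega)
    · have hlt : ψ i < i := hψ.2 i hi hin
      rw [Function.iterate_succ_apply]
      exact (ih (ψ i) (by omega)).trans (by omega)

lemma iter_lt (hψ : IsHeap n ψ) {m i : ℕ} (hm : 1 ≤ m) (h1 : 1 ≤ i) (h2 : i ≤ n) :
    ψ^[m] i < i := by
  obtain ⟨m', rfl⟩ : ∃ m', m = m' + 1 := ⟨m - 1, by omega⟩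
  have hlt : ψ i < i := hψ.2 i h1 h2
  rw [Function.iterate_succ_apply]
  exact (iter_le hψ m' (ψ i) (by omega)).trans_lt hlt

lemma iter_dp_eq_zero (hψ : IsHeap n ψ) {i : ℕ} (h1 : 1 ≤ i) (h2 : i ≤ n) :
    ψ^[dp ψ i] i = 0 := by
  have hdp := dp_pos hψ h1 h2
  obtain ⟨m, hm⟩ : ∃ m, dp ψ i = m + 1 := ⟨dp ψ i - 1, by omega⟩
  have hv := iter_spec hψ m i h1 h2 (by omega)
  set v := ψ^[m] i with hvdef
  have hdv : dp ψ v = 1 := by omega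
  have hd := dp_succ' hψ hv.1 hv.2.1
  have hpsiv : ψ v = 0 := by
    by_contra h
    have h1' : 1 ≤ ψ v := by omega
    have h2' : ψ v ≤ n := by have := hψ.2 v hv.1 hv.2.1; omega
    have := dp_pos hψ h1' h2'
    omega
  rw [hm, Function.iterate_succ_apply', ← hvdef, hpsiv]

end HeapLemmas
section StarLemmas

variable {n : ℕ} {ψ : ℕ → ℕ} {φ : ℕ → ℕ → ℕ}

/-- Compatibility propagates along iterates. -/
lemma compat_iter (hψ : IsHeap n ψ) (hφ : CompatFam n ψ φ) :
    ∀ m i, 1 ≤ i → i ≤ n → m < dp ψ i → ∀ j, j ≤ dp ψ i - m →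
      φ (ψ^[m] i) j = φ i j := by
  intro m
  induction m with
  | zero => intro i _ _ _ _ _; rfl
  | succ m ih =>
    intro i h1 h2 hm j hj
    have hd := dp_succ' hψ h1 h2
    have hpsi1 : 1 ≤ ψ i := by
      by_contra h
      have : ψ i = 0 := by omega
      rw [this, dp_zero] at hd
      omega
    have hlt : ψ i < i := hψ.2 i h1 h2
    rw [Function.iterate_succ_apply,
      ih (ψ i) hpsi1 (by omega) (by omega) j (by omega),
      hφ.2 i h1 h2 hpsi1 j (by omega)]

lemma star_lt (hψ : IsHeap n ψ) (hφ : CompatFam n ψ φ) {v : ℕ}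
    (h1 : 1 ≤ v) (h2 : v ≤ n) : star ψ φ v < v := by
  have hdp := dp_pos hψ h1 h2
  have hheap := hφ.1 v h1 h2
  have hfv : φ v (dp ψ v) < dp ψ v := hheap.2 _ hdp le_rfl
  have : star ψ φ v = ψ^[dp ψ v - φ v (dp ψ v)] v := if_neg (by omega)
  rw [this]
  exact iter_lt hψ (by omega) h1 h2

lemma star_dec (hψ : IsHeap n ψ) (hφ : CompatFam n ψ φ) {v : ℕ} (hv : v ≤ n) :
    ∀ j, 1 ≤ j → j ≤ v → star ψ φ j < j :=
  fun j hj1 hj2 => star_lt hψ hφ hj1 (hj2.trans hv)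

/-- The key lemma: values and depths of `star ψ φ` along the downset of `i`. -/
lemma star_key (hψ : IsHeap n ψ) (hφ : CompatFam n ψ φ) :
    ∀ j i, 1 ≤ i → i ≤ n → 1 ≤ j → j ≤ dp ψ i →
      star ψ φ (ψ^[dp ψ i - j] i) = ψ^[dp ψ i - φ i j] i ∧
      dp (star ψ φ) (ψ^[dp ψ i - j] i) = dp (φ i) j := by
  intro j
  induction j using Nat.strong_induction_on with
  | _ j ihj =>
    intro i h1 h2 hj1 hj2
    have hv := iter_spec hψ (dp ψ i - j) i h1 h2 (by omega)
    set v := ψ^[dp ψ i - j] i with hvdef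
    have hdv : dp ψ v = j := by omega
    have hc : φ v j = φ i j :=
      compat_iter hψ hφ (dp ψ i - j) i h1 h2 (by omega) j (by omega)
    have hheap := hφ.1 i h1 h2
    have hcj : φ i j < j := hheap.2 j hj1 hj2
    have hstarv : star ψ φ v = ψ^[dp ψ i - φ i j] i := by
      have h0 : star ψ φ v = ψ^[dp ψ v - φ v (dp ψ v)] v := if_neg (by omega)
      rw [h0, hdv, hc, hvdef, ← Function.iterate_add_apply]
      congr 1
      omega
    refine ⟨hstarv, ?_⟩
    have hdec1 : ∀ w, 1 ≤ w → w ≤ v → star ψ φ w < w := star_dec hψ hφ hv.2.1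
    rw [dp_succ (star ψ φ) v hdec1 hv.1, hstarv]
    have hdecφ : ∀ w, 1 ≤ w → w ≤ j → φ i w < w :=
      fun w hw1 hw2 => hheap.2 w hw1 (by omega)
    rw [dp_succ (φ i) j hdecφ hj1]
    rcases Nat.eq_zero_or_pos (φ i j) with hz | hpos
    · rw [hz, dp_zero, Nat.sub_zero, iter_dp_eq_zero hψ h1 h2, dp_zero]
    · have := (ihj (φ i j) hcj i h1 h2 hpos (by omega)).2
      omega

end StarLemmas
section Unique

variable {n : ℕ} {ψ : ℕ → ℕ}

lemma lab_unique (hψ : IsHeap n ψ) (X : TT) (k : ℕ → Option X.Ty)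
    (H : ℕ → ℕ → Option X.Ty)
    (hcomp : ∀ i, 1 ≤ i → i ≤ n → 1 ≤ ψ i →
      ∀ j, 1 ≤ j → j ≤ dp ψ i - 1 → H (ψ i) j = H i j)
    (htop : ∀ i, 1 ≤ i → i ≤ n → H i (dp ψ i) = k i) :
    ∀ i, 1 ≤ i → i ≤ n → ∀ j, 1 ≤ j → j ≤ dp ψ i →
      H i j = k (ψ^[dp ψ i - j] i) := by
  intro i
  induction i using Nat.strong_induction_on with
  | _ i ih =>
    intro h1 h2 j hj1 hj2
    rcases Nat.eq_or_lt_of_le hj2 with heq | hlt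
    · subst heq
      rw [Nat.sub_self, Function.iterate_zero_apply]
      exact htop i h1 h2
    · have hd := dp_succ' hψ h1 h2
      have hpsi1 : 1 ≤ ψ i := by
        by_contra h
        have : ψ i = 0 := by omega
        rw [this, dp_zero] at hd
        omega
      have hlt' : ψ i < i := hψ.2 i h1 h2
      rw [← hcomp i h1 h2 hpsi1 j hj1 (by omega),
        ih (ψ i) hlt' hpsi1 (by omega) j hj1 (by omega)]
      congr 1
      rw [← Function.iterate_succ_apply]
      congr 1
      omega

end Unique
/-- **Statement 7.** Let `ψ ∈ Hp(n)`, `φ` a `ψ`-compatible family of heaps,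
`X ∈ [H^op, Set]`, and `k : [ψ⋆φ] → X` any morphism.  Then there is a unique
compatible family of morphisms `H i : [φ_i] → X` with `ψ⋆H = k`; explicitly,
`H i j = k (ψ^[dp_ψ(i) − j] i)` (the value of `k` at the `j`-th member of the
`≼_ψ`-downset of `i`). -/
theorem star_lab_bijective (n : ℕ) (ψ : ℕ → ℕ) (hψ : IsHeap n ψ)
    (φ : ℕ → ℕ → ℕ) (hφ : CompatFam n ψ φ)
    (X : TT) (k : ℕ → Option X.Ty) (hk : IsHeapLab X n (star ψ φ) k) :
    (∃! H : ℕ → ℕ → Option X.Ty,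
      (∀ i, 1 ≤ i → i ≤ n → IsHeapLab X (dp ψ i) (φ i) (H i)) ∧
      (∀ i, ¬(1 ≤ i ∧ i ≤ n) → H i = fun _ => none) ∧
      (∀ i, 1 ≤ i → i ≤ n → 1 ≤ ψ i →
        ∀ j, 1 ≤ j → j ≤ dp ψ i - 1 → H (ψ i) j = H i j) ∧
      (∀ i, 1 ≤ i → i ≤ n → H i (dp ψ i) = k i)) ∧
    (∀ H : ℕ → ℕ → Option X.Ty,
      (∀ i, 1 ≤ i → i ≤ n → IsHeapLab X (dp ψ i) (φ i) (H i)) →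
      (∀ i, 1 ≤ i → i ≤ n → 1 ≤ ψ i →
        ∀ j, 1 ≤ j → j ≤ dp ψ i - 1 → H (ψ i) j = H i j) →
      (∀ i, 1 ≤ i → i ≤ n → H i (dp ψ i) = k i) →
      ∀ i, 1 ≤ i → i ≤ n → ∀ j, 1 ≤ j → j ≤ dp ψ i →
        H i j = k (ψ^[dp ψ i - j] i)) := by
  constructor
  · -- existence and uniqueness
    set H₀ : ℕ → ℕ → Option X.Ty := fun i j =>
      if 1 ≤ i ∧ i ≤ n ∧ 1 ≤ j ∧ j ≤ dp ψ i then k (ψ^[dp ψ i - j] i) else none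
      with hH₀def
    have hH₀eq : ∀ i j, 1 ≤ i → i ≤ n → 1 ≤ j → j ≤ dp ψ i →
        H₀ i j = k (ψ^[dp ψ i - j] i) := by
      intro i j h1 h2 hj1 hj2
      rw [hH₀def]
      exact if_pos ⟨h1, h2, hj1, hj2⟩
    have hH₀none : ∀ i j, ¬(1 ≤ i ∧ i ≤ n ∧ 1 ≤ j ∧ j ≤ dp ψ i) → H₀ i j = none := by
      intro i j h
      rw [hH₀def]
      exact if_neg h
    refine ⟨H₀, ⟨?_, ?_, ?_, ?_⟩, ?_⟩
    · -- IsHeapLab for each i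
      intro i h1 h2
      refine ⟨?_, ?_, ?_⟩
      · intro j hj1 hj2
        have hv := iter_spec hψ (dp ψ i - j) i h1 h2 (by omega)
        obtain ⟨A, hA, hdeg⟩ := hk.1 _ hv.1 hv.2.1
        refine ⟨A, ?_, ?_⟩
        · rw [hH₀eq i j h1 h2 hj1 hj2]; exact hA
        · rw [hdeg, (star_key hψ hφ j i h1 h2 hj1 hj2).2]
      · intro j hj
        exact hH₀none i j (by tauto)
      · intro j hj1 hj2 hφj1
        have hkey := star_key hψ hφ j i h1 h2 hj1 hj2
        have hv := iter_spec hψ (dp ψ i - j) i h1 h2 (by omega)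
        have hcj : φ i j < j := (hφ.1 i h1 h2).2 j hj1 hj2
        have hv' := iter_spec hψ (dp ψ i - φ i j) i h1 h2 (by omega)
        have h1star : 1 ≤ star ψ φ (ψ^[dp ψ i - j] i) := by
          rw [hkey.1]; exact hv'.1
        rw [hH₀eq i j h1 h2 hj1 hj2, hk.2.2 _ hv.1 hv.2.1 h1star, hkey.1,
          hH₀eq i (φ i j) h1 h2 hφj1 (by omega)]
    · -- none outside range
      intro i hi
      funext j
      exact hH₀none i j (by tauto)
    · -- compatibility
      intro i h1 h2 hpsi1 j hj1 hj2
      have hlt := hψ.2 i h1 h2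
      have hd := dp_succ' hψ h1 h2
      rw [hH₀eq (ψ i) j hpsi1 (by omega) hj1 (by omega),
        hH₀eq i j h1 h2 hj1 (by omega)]
      congr 1
      rw [← Function.iterate_succ_apply]
      congr 1
      omega
    · -- top
      intro i h1 h2
      rw [hH₀eq i (dp ψ i) h1 h2 (dp_pos hψ h1 h2) le_rfl, Nat.sub_self,
        Function.iterate_zero_apply]
    · -- uniqueness
      rintro H' ⟨hlab', hnone', hcomp', htop'⟩
      funext i j
      by_cases hi : 1 ≤ i ∧ i ≤ n
      · by_cases hj : 1 ≤ j ∧ j ≤ dp ψ i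
        · rw [lab_unique hψ X k H' hcomp' htop' i hi.1 hi.2 j hj.1 hj.2,
            hH₀eq i j hi.1 hi.2 hj.1 hj.2]
        · rw [(hlab' i hi.1 hi.2).2.1 j hj, hH₀none i j (by tauto)]
      · rw [hnone' i hi, hH₀none i j (by tauto)]
  · -- explicit formula
    intro H _ hcomp htop
    exact lab_unique hψ X k H hcomp htop
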